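/- (Probability of a lattice, Eq. (13).) Let a, q : Fin n → ℝ satisfy a i + q i = 1 for all i, and define the probability of a state s ∈ (Fin n → Bool) by P(s) = ∏_{i} (if s i then q i else a i). Then for any s1 ≤ s2, the sum of P(s) over all states s in the interval [s1, s2] equals (∏_{i : s2 i = false} a i) · (∏_{i : s1 i = true} q i). -/

import Mathlib

/-! The interval `[s1, s2]` is the product of the coordinate intervals `[s1 i, s2 i]`, so the
sum of the product-form weight `P` over it factorizes into one-coordinate sums. Such a sum is
`a i` if `s1 i = s2 i = false`, `a i + q i = 1` if `s1 i < s2 i`, and `q i` if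
`s1 i = s2 i = true`. -/

open Finset

theorem Fintype.sum_filter_le_le_prod_eq_prod_sum {ι R : Type*} [Fintype ι] [DecidableEq ι]
    [CommSemiring R] {α : ι → Type*} [∀ i, Fintype (α i)] [∀ i, Preorder (α i)]
    [∀ i, DecidableLE (α i)] (s1 s2 : ∀ i, α i)
    [DecidablePred fun s : (∀ i, α i) => s1 ≤ s ∧ s ≤ s2] (f : ∀ i, α i → R) :
    ∑ s ∈ univ.filter (fun s => s1 ≤ s ∧ s ≤ s2), ∏ i, f i (s i) =
      ∏ i, ∑ b ∈ univ.filter (fun b => s1 i ≤ b ∧ b ≤ s2 i), f i b := by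
  rw [prod_univ_sum]
  congr 1
  ext s
  simp [Fintype.mem_piFinset, Pi.le_def, forall_and]

theorem Bool.sum_filter_le_le_ite {R : Type*} [NonAssocSemiring R] {a q : R} (hsum : a + q = 1)
    {x y : Bool} (hxy : x ≤ y) :
    ∑ b ∈ univ.filter (fun b => x ≤ b ∧ b ≤ y), (if b then q else a) =
      (if y = false then a else 1) * (if x = true then q else 1) := by
  rw [sum_filter, Fintype.sum_bool]
  cases x <;> cases y <;> simp_all [Bool.le_iff_imp, add_comm]

open Classical in
theorem lattice_probability (n : ℕ) (a q : Fin n → ℝ) (hsum : ∀ i, a i + q i = 1)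
    (s1 s2 : Fin n → Bool) (h : s1 ≤ s2) :
    ∑ s ∈ Finset.univ.filter (fun s : Fin n → Bool => s1 ≤ s ∧ s ≤ s2),
        ∏ i, (if s i then q i else a i) =
      (∏ i ∈ Finset.univ.filter (fun i : Fin n => s2 i = false), a i) *
        ∏ i ∈ Finset.univ.filter (fun i : Fin n => s1 i = true), q i := by
  rw [Fintype.sum_filter_le_le_prod_eq_prod_sum s1 s2 fun i b => if b then q i else a i,
    prod_filter, prod_filter, ← prod_mul_distrib]
  exact prod_congr rfl fun i _ => Bool.sum_filter_le_le_ite (hsum i) (h i)
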